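/- Under the Bounded-Coefficient Scheme Hypotheses, assume additionally that all the maps T_1, …, T_m and I_1, …, I_m are continuous. Then lim_{n→∞} ‖y_n − x_n‖ = 0. -/

import Mathlib

/-!
Fix a common fixed point `p`. Since every gauge grows at most linearly at infinity, the
defining estimates of `Iᵢ` and `Tᵢ` linearise to `‖Sⁿ z - p‖ ≤ (1 + kₙ) ‖z - p‖ + eₙ` for all
the maps `S = Iᵢ, Tᵢ`, with common nonnegative summable `k, e`. Consequently `‖xₙ - p‖`
satisfies a perturbed nonexpansive recursion and converges to some `l`. Write
`yₙ - p = β₀ₙ (xₙ - p) + (1 - β₀ₙ) vₙ`, where `vₙ` averages the `Iᵢⁿ xₙ - p`. Then `‖vₙ‖` is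
asymptotically at most `l`, and because `α₀ₙ ≤ α^* < 1` the step `xₙ → xₙ₊₁` can only keep
`‖xₙ₊₁ - p‖` near `l` if `‖yₙ - p‖ → l` too. Since `β₀ₙ` stays away from `0` and `1`, uniform
convexity (Schu's lemma) gives `‖(xₙ - p) - vₙ‖ → 0`, and `yₙ - xₙ = (1 - β₀ₙ) (vₙ - (xₙ - p))`.
-/

open Filter Set Topology

theorem summable_mul_of_nonneg {ι : Type*} {f g : ι → ℝ} (hf : Summable f) (hg : Summable g)
    (hf0 : ∀ i, 0 ≤ f i) (hg0 : ∀ i, 0 ≤ g i) : Summable fun i => f i * g i :=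
  .of_nonneg_of_le (fun i => mul_nonneg (hf0 i) (hg0 i))
    (fun i => mul_le_mul_of_nonneg_left (hg.le_tsum i fun j _ => hg0 j) (hf0 i))
    (hf.mul_right _)

theorem exists_tendsto_of_le_add_of_summable {r e : ℕ → ℝ} (hr : BddBelow (range r))
    (he0 : ∀ n, 0 ≤ e n) (he : Summable e) (hrec : ∀ n, r (n + 1) ≤ r n + e n) :
    ∃ l, Tendsto r atTop (𝓝 l) := by
  set g := fun n => r n - ∑ k ∈ Finset.range n, e k
  have hg : Antitone g := antitone_nat_of_succ_le fun n => by
    simp only [g, Finset.sum_range_succ]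
    linarith [hrec n]
  obtain ⟨c, hc⟩ := hr
  have hgb : BddBelow (range g) := ⟨c - ∑' k, e k, by
    rintro _ ⟨n, rfl⟩
    linarith [hc (mem_range_self n), he.sum_le_tsum (Finset.range n) fun k _ => he0 k]⟩
  refine ⟨(⨅ n, g n) + ∑' k, e k, ?_⟩
  convert (tendsto_atTop_ciInf hg hgb).add he.hasSum.tendsto_sum_nat using 1
  ext n
  simp [g]

theorem le_of_le_one_add_mul_add {r c d : ℕ → ℝ} (hr0 : ∀ n, 0 ≤ r n) (hc0 : ∀ n, 0 ≤ c n)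
    (hd0 : ∀ n, 0 ≤ d n) (hc : Summable c) (hd : Summable d)
    (hrec : ∀ n, r (n + 1) ≤ (1 + c n) * r n + d n) (n : ℕ) :
    r n ≤ (r 0 + ∑' k, d k) * Real.exp (∑' k, c k) := by
  have partial_bound : ∀ n, r n ≤
      (r 0 + ∑ k ∈ Finset.range n, d k) * Real.exp (∑ k ∈ Finset.range n, c k) := by
    intro n
    induction n with
    | zero => simp
    | succ n ih =>
      have hexp : 1 + c n ≤ Real.exp (c n) := by linarith [Real.add_one_le_exp (c n)]
      have hone : 1 ≤ Real.exp (∑ k ∈ Finset.range n, c k) * Real.exp (c n) :=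
        one_le_mul_of_one_le_of_one_le (Real.one_le_exp (Finset.sum_nonneg fun k _ => hc0 k))
          (Real.one_le_exp (hc0 n))
      calc r (n + 1) ≤ (1 + c n) * r n + d n := hrec n
        _ ≤ Real.exp (c n) * ((r 0 + ∑ k ∈ Finset.range n, d k) *
              Real.exp (∑ k ∈ Finset.range n, c k)) +
            d n * (Real.exp (∑ k ∈ Finset.range n, c k) * Real.exp (c n)) := by
          gcongr
          · exact hr0 n
          · exact le_mul_of_one_le_right (hd0 n) hone
        _ = _ := by rw [Finset.sum_range_succ, Finset.sum_range_succ, Real.exp_add]; ring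
  have hd_le := hd.sum_le_tsum (Finset.range n) fun k _ => hd0 k
  have hc_le := hc.sum_le_tsum (Finset.range n) fun k _ => hc0 k
  refine (partial_bound n).trans
    (mul_le_mul (by linarith) (Real.exp_le_exp.2 hc_le) (by positivity) ?_)
  linarith [hr0 0, (tsum_nonneg hd0 : 0 ≤ ∑' k, d k)]

theorem exists_tendsto_of_le_one_add_mul_add {r c d : ℕ → ℝ} (hr0 : ∀ n, 0 ≤ r n)
    (hc0 : ∀ n, 0 ≤ c n) (hd0 : ∀ n, 0 ≤ d n) (hc : Summable c) (hd : Summable d)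
    (hrec : ∀ n, r (n + 1) ≤ (1 + c n) * r n + d n) :
    ∃ l, Tendsto r atTop (𝓝 l) := by
  have hR := le_of_le_one_add_mul_add hr0 hc0 hd0 hc hd hrec
  refine exists_tendsto_of_le_add_of_summable ⟨0, ?_⟩ (fun n => ?_)
    ((hc.mul_left ((r 0 + ∑' k, d k) * Real.exp (∑' k, c k))).add hd) (fun n => ?_)
  · rintro _ ⟨n, rfl⟩
    exact hr0 n
  · exact add_nonneg (mul_nonneg ((hr0 0).trans (hR 0)) (hc0 n)) (hd0 n)
  · nlinarith [hrec n, hR n, hc0 n]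

theorem tendsto_of_le_mul_add_one_sub_mul {r α σ τ : ℕ → ℝ} {A l : ℝ}
    (hr : Tendsto r atTop (𝓝 l)) (hα0 : ∀ n, 0 ≤ α n) (hαA : ∀ n, α n ≤ A) (hA : A < 1)
    (hrec : ∀ n, r (n + 1) ≤ α n * r n + (1 - α n) * σ n) (hστ : ∀ n, σ n ≤ τ n)
    (hτ : Tendsto τ atTop (𝓝 l)) : Tendsto σ atTop (𝓝 l) := by
  set D := fun n => |r (n + 1) - l| + |r n - l|
  have hD : Tendsto D atTop (𝓝 0) := by
    have h := ((hr.comp (tendsto_add_atTop_nat 1)).sub_const l).abs.add (hr.sub_const l).abs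
    simpa using h
  refine tendsto_of_tendsto_of_tendsto_of_le_of_le (g := fun n => l - D n / (1 - A))
    (by simpa using tendsto_const_nhds.sub (hD.div_const (1 - A))) hτ (fun n => ?_) hστ
  -- `(1 - α n) (σ n - l) ≥ (r (n + 1) - l) - α n (r n - l)` and `1 - α n ≥ 1 - A`
  have hdev : (1 - α n) * (l - σ n) ≤ D n := by
    have := hrec n
    have : α n * (r n - l) ≤ |r n - l| :=
      (mul_le_mul_of_nonneg_left (le_abs_self _) (hα0 n)).trans
        (mul_le_of_le_one_left (abs_nonneg _) (by linarith [hαA n]))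
    linarith [neg_abs_le (r (n + 1) - l)]
  rw [sub_le_comm, le_div_iff₀ (by linarith)]
  rcases le_total (l - σ n) 0 with h | h
  · nlinarith [abs_nonneg (r (n + 1) - l), abs_nonneg (r n - l)]
  · nlinarith [hαA n]

theorem le_mul_add_of_monotoneOn {φ : ℝ → ℝ} {N c d : ℝ} (hφ : MonotoneOn φ (Ici 0))
    (hN : 0 ≤ N) (hc : 0 ≤ c) (hφN : 0 ≤ φ N) (hbound : ∀ ξ, N ≤ ξ → φ ξ ≤ c * ξ)
    (hd : 0 ≤ d) : φ d ≤ c * d + φ N := by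
  rcases le_total N d with h | h
  · linarith [hbound d h]
  · linarith [hφ hd hN h, mul_nonneg hc hd]

section Normed

variable {E : Type*} [SeminormedAddCommGroup E]

/-- With `R n = id` this is the estimate `‖Sⁿ z - p‖ ≤ (1 + kₙ) ‖z - p‖ + eₙ` of a generalized
asymptotically quasi-nonexpansive map; a general `R` compares `Tⁿ` with `Iⁿ`. -/
def HasSummableQuasiBound (K : Set E) (p : E) (S R : ℕ → E → E) : Prop :=
  ∃ k e : ℕ → ℝ, (∀ n, 0 ≤ k n) ∧ (∀ n, 0 ≤ e n) ∧ Summable k ∧ Summable e ∧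
    ∀ n, ∀ z ∈ K, ‖S n z - p‖ ≤ (1 + k n) * ‖R n z - p‖ + e n

namespace HasSummableQuasiBound

variable {K : Set E} {p : E}

theorem of_gauge {S R : ℕ → E → E} (hSR : S 0 = R 0) {μ ν : ℕ → ℝ} (hμ0 : ∀ n, 0 ≤ μ n)
    (hν0 : ∀ n, 0 ≤ ν n) (hμ : Summable μ) (hν : Summable ν) {φ : ℝ → ℝ} {N c : ℝ}
    (hφ : MonotoneOn φ (Ici 0)) (hN : 0 ≤ N) (hc : 0 ≤ c) (hφN : 0 ≤ φ N)
    (hbound : ∀ ξ, N ≤ ξ → φ ξ ≤ c * ξ)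
    (hS : ∀ n, 1 ≤ n → ∀ z ∈ K, ‖S n z - p‖ ≤ ‖R n z - p‖ + μ n * φ ‖R n z - p‖ + ν n) :
    HasSummableQuasiBound K p S R := by
  refine ⟨fun n => μ n * c, fun n => μ n * φ N + ν n, fun n => mul_nonneg (hμ0 n) hc,
    fun n => add_nonneg (mul_nonneg (hμ0 n) hφN) (hν0 n), hμ.mul_right c,
    (hμ.mul_right _).add hν, fun n z hz => ?_⟩
  have hRz := norm_nonneg (R n z - p)
  rcases Nat.eq_zero_or_pos n with rfl | hn
  · rw [hSR]
    nlinarith [mul_nonneg (hμ0 0) hc, mul_nonneg (hμ0 0) hφN, hν0 0]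
  · have h := hS n hn z hz
    nlinarith [mul_le_mul_of_nonneg_left (le_mul_add_of_monotoneOn hφ hN hc hφN hbound hRz)
      (hμ0 n)]

theorem trans {S R : ℕ → E → E} (hSR : HasSummableQuasiBound K p S R)
    (hR : HasSummableQuasiBound K p R fun _ => id) :
    HasSummableQuasiBound K p S fun _ => id := by
  obtain ⟨k, e, hk0, he0, hk, he, hS⟩ := hSR
  obtain ⟨k', e', hk0', he0', hk', he', hR⟩ := hR
  refine ⟨fun n => k n + k' n + k n * k' n, fun n => (1 + k n) * e' n + e n,
    fun n => add_nonneg (add_nonneg (hk0 n) (hk0' n)) (mul_nonneg (hk0 n) (hk0' n)),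
    fun n => add_nonneg (mul_nonneg (by linarith [hk0 n]) (he0' n)) (he0 n),
    (hk.add hk').add (summable_mul_of_nonneg hk hk' hk0 hk0'),
    ((he'.add (summable_mul_of_nonneg hk he' hk0 he0')).add he).congr fun n => by ring,
    fun n z hz => ?_⟩
  have := hk0 n
  calc ‖S n z - p‖ ≤ (1 + k n) * ‖R n z - p‖ + e n := hS n z hz
    _ ≤ (1 + k n) * ((1 + k' n) * ‖z - p‖ + e' n) + e n := by gcongr; exact hR n z hz
    _ = _ := by simp only [id]; ring

theorem exists_common {ι : Type*} [Fintype ι] {S : ι → ℕ → E → E}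
    (h : ∀ i, HasSummableQuasiBound K p (S i) fun _ => id) :
    ∃ k e : ℕ → ℝ, (∀ n, 0 ≤ k n) ∧ (∀ n, 0 ≤ e n) ∧ Summable k ∧ Summable e ∧
      ∀ i n, ∀ z ∈ K, ‖S i n z - p‖ ≤ (1 + k n) * ‖z - p‖ + e n := by
  choose k e hk0 he0 hk he hS using h
  refine ⟨fun n => ∑ i, k i n, fun n => ∑ i, e i n,
    fun n => Finset.sum_nonneg fun i _ => hk0 i n,
    fun n => Finset.sum_nonneg fun i _ => he0 i n,
    summable_sum fun i _ => hk i, summable_sum fun i _ => he i,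
    fun i n z hz => (hS i n z hz).trans ?_⟩
  have hki := Finset.single_le_sum (fun j _ => hk0 j n) (Finset.mem_univ i)
  have hei := Finset.single_le_sum (fun j _ => he0 j n) (Finset.mem_univ i)
  simp only [id]
  gcongr

end HasSummableQuasiBound

variable [NormedSpace ℝ E]

theorem norm_smul_add_one_sub_smul_le {x y : E} {L δ t : ℝ} (hx : ‖x‖ ≤ L) (hy : ‖y‖ ≤ L)
    (hxy : ‖x + y‖ ≤ L * (2 - δ)) (ht0 : 0 ≤ t) (ht1 : t ≤ 1) :
    ‖t • x + (1 - t) • y‖ ≤ L * (1 - min t (1 - t) * δ) := by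
  rcases le_total t (1 / 2) with h | h
  · rw [min_eq_left (by linarith)]
    calc ‖t • x + (1 - t) • y‖ = ‖t • (x + y) + (1 - 2 * t) • y‖ := by congr 1; module
      _ ≤ t * ‖x + y‖ + (1 - 2 * t) * ‖y‖ := by
        refine (norm_add_le _ _).trans_eq ?_
        rw [norm_smul_of_nonneg ht0, norm_smul_of_nonneg (by linarith)]
      _ ≤ t * (L * (2 - δ)) + (1 - 2 * t) * L := by gcongr; linarith
      _ = L * (1 - t * δ) := by ring
  · rw [min_eq_right (by linarith)]
    calc ‖t • x + (1 - t) • y‖ = ‖(1 - t) • (x + y) + (2 * t - 1) • x‖ := by congr 1; module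
      _ ≤ (1 - t) * ‖x + y‖ + (2 * t - 1) * ‖x‖ := by
        refine (norm_add_le _ _).trans_eq ?_
        rw [norm_smul_of_nonneg (by linarith), norm_smul_of_nonneg (by linarith)]
      _ ≤ (1 - t) * (L * (2 - δ)) + (2 * t - 1) * L := by gcongr; linarith
      _ = L * (1 - (1 - t) * δ) := by ring

theorem Convex.smul_add_sum_smul_mem {K : Set E} (hK : Convex ℝ K) {m : ℕ}
    {w : Fin (m + 1) → ℝ} (hw0 : ∀ j, 0 ≤ w j) (hw : ∑ j, w j = 1) {z : E} (hz : z ∈ K)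
    {f : Fin m → E} (hf : ∀ i, f i ∈ K) : w 0 • z + ∑ i, w i.succ • f i ∈ K := by
  simpa [Fin.sum_univ_succ] using hK.sum_mem (fun j _ => hw0 j) hw fun j _ =>
    Fin.cases (motive := fun j => (Fin.cons z f : Fin (m + 1) → E) j ∈ K) hz hf j

theorem smul_add_sum_smul_sub {m : ℕ} {w : Fin (m + 1) → ℝ} (hw : ∑ j, w j = 1)
    (z p : E) (f : Fin m → E) :
    w 0 • z + ∑ i, w i.succ • f i - p = w 0 • (z - p) + ∑ i, w i.succ • (f i - p) := by
  rw [Fin.sum_univ_succ] at hw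
  conv_lhs => rw [← one_smul ℝ p, ← hw]
  simp only [add_smul, Finset.sum_smul, smul_sub, Finset.sum_sub_distrib]
  abel

theorem norm_sum_smul_le_of_norm_le {ι : Type*} (s : Finset ι) {w : ι → ℝ} {g : ι → E}
    {B : ℝ} (hw0 : ∀ i ∈ s, 0 ≤ w i) (hg : ∀ i ∈ s, ‖g i‖ ≤ B) :
    ‖∑ i ∈ s, w i • g i‖ ≤ (∑ i ∈ s, w i) * B := by
  rw [Finset.sum_mul]
  refine norm_sum_le_of_le s fun i hi => ?_
  rw [norm_smul_of_nonneg (hw0 i hi)]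
  exact mul_le_mul_of_nonneg_left (hg i hi) (hw0 i hi)

theorem twoStepIteration_mem {K : Set E} (hK : Convex ℝ K) {m : ℕ} {P Q : Fin m → ℕ → E → E}
    (hPK : ∀ i n, MapsTo (P i n) K K) (hQK : ∀ i n, MapsTo (Q i n) K K)
    {a b : Fin (m + 1) → ℕ → ℝ} (ha0 : ∀ j n, 0 ≤ a j n) (hb0 : ∀ j n, 0 ≤ b j n)
    (hasum : ∀ n, ∑ j, a j n = 1) (hbsum : ∀ n, ∑ j, b j n = 1) {x y : ℕ → E} (hx0 : x 0 ∈ K)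
    (hy : ∀ n, y n = b 0 n • x n + ∑ i, b i.succ n • P i n (x n))
    (hx : ∀ n, x (n + 1) = a 0 n • x n + ∑ i, a i.succ n • Q i n (y n)) (n : ℕ) :
    x n ∈ K ∧ y n ∈ K := by
  have hyK : ∀ n, x n ∈ K → y n ∈ K := fun n hxn =>
    hy n ▸ hK.smul_add_sum_smul_mem (fun j => hb0 j n) (hbsum n) hxn fun i => hPK i n hxn
  induction n with
  | zero => exact ⟨hx0, hyK 0 hx0⟩
  | succ n ih =>
    have hxn : x (n + 1) ∈ K := hx n ▸
      hK.smul_add_sum_smul_mem (fun j => ha0 j n) (hasum n) ih.1 fun i => hQK i n ih.2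
    exact ⟨hxn, hyK _ hxn⟩

variable [UniformConvexSpace E]

variable (E) in
theorem exists_forall_norm_le_dist_add_le_mul_two_sub {ε R : ℝ} (hε : 0 < ε) (hR : 0 < R) :
    ∃ δ, 0 < δ ∧ ∀ ⦃L⦄, L ≤ R → ∀ ⦃x : E⦄, ‖x‖ ≤ L → ∀ ⦃y⦄, ‖y‖ ≤ L → ε ≤ ‖x - y‖ →
      ‖x + y‖ ≤ L * (2 - δ) := by
  obtain ⟨δ, hδ, h⟩ := exists_forall_closed_ball_dist_add_le_two_sub E (div_pos hε hR)
  refine ⟨δ, hδ, fun L hLR x hx y hy hxy => ?_⟩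
  have hL : 0 < L := by linarith [hxy.trans (norm_sub_le_of_le hx hy)]
  have hunit : ∀ {z : E}, ‖z‖ ≤ L → ‖L⁻¹ • z‖ ≤ 1 := fun hz => by
    rw [norm_smul_of_nonneg (inv_nonneg.2 hL.le), inv_mul_le_one₀ hL]
    exact hz
  have hdist : ε / R ≤ ‖L⁻¹ • x - L⁻¹ • y‖ := by
    rw [← smul_sub, norm_smul_of_nonneg (inv_nonneg.2 hL.le), inv_mul_eq_div,
      div_le_div_iff₀ hR hL]
    nlinarith
  have := h (hunit hx) (hunit hy) hdist
  rwa [← smul_add, norm_smul_of_nonneg (inv_nonneg.2 hL.le), inv_mul_le_iff₀ hL] at this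

theorem tendsto_norm_sub_of_tendsto_norm_smul_add_one_sub_smul {u v : ℕ → E} {t s : ℕ → ℝ}
    {a b l : ℝ} (ht : ∀ n, t n ∈ Icc a b) (ha : 0 < a) (hb : b < 1)
    (hu : ∀ n, ‖u n‖ ≤ s n) (hv : ∀ n, ‖v n‖ ≤ s n) (hs : Tendsto s atTop (𝓝 l))
    (hw : Tendsto (fun n => ‖t n • u n + (1 - t n) • v n‖) atTop (𝓝 l)) :
    Tendsto (fun n => ‖u n - v n‖) atTop (𝓝 0) := by
  refine tendsto_order.2 ⟨fun c hc => .of_forall fun n => hc.trans_le (norm_nonneg _),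
    fun ε hε => ?_⟩
  have hl : 0 ≤ l := ge_of_tendsto' hw fun n => norm_nonneg _
  obtain ⟨δ, hδ, huc⟩ := exists_forall_norm_le_dist_add_le_mul_two_sub E hε (R := l + 1)
    (by linarith)
  set c := min a (1 - b)
  have hc : 0 < c := lt_min ha (by linarith)
  set η := min 1 (ε * c * δ / 8)
  have hη : 0 < η := lt_min one_pos (by positivity)
  have hη1 : η ≤ 1 := min_le_left _ _
  have hηε : η ≤ ε * c * δ / 8 := min_le_right _ _
  filter_upwards [hs.eventually_lt_const (lt_add_of_pos_right l hη),
    hw.eventually_const_lt (sub_lt_self l hη)] with n hsn hwn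
  -- `‖u n - v n‖ ≥ ε` forces `L ≥ ε / 2`, so uniform convexity pushes the norm of the
  -- combination below `L - ε c δ / 2 < l - η`
  by_contra! hεn
  set L := l + η
  have hctn : c ≤ min (t n) (1 - t n) := min_le_min (ht n).1 (by linarith [(ht n).2])
  have hwL : ‖t n • u n + (1 - t n) • v n‖ ≤ L * (1 - c * δ) :=
    (norm_smul_add_one_sub_smul_le ((hu n).trans hsn.le) ((hv n).trans hsn.le)
      (huc (by linarith) ((hu n).trans hsn.le) ((hv n).trans hsn.le) hεn)
      (ha.le.trans (ht n).1) ((ht n).2.trans hb.le)).trans (by gcongr)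
  have hεL : ε ≤ 2 * L := by
    linarith [hεn.trans (norm_sub_le_of_le ((hu n).trans hsn.le) ((hv n).trans hsn.le))]
  nlinarith [mul_le_mul_of_nonneg_right hεL (mul_pos hc hδ).le]

theorem tendsto_norm_sub_of_norm_succ_le {u v : ℕ → E} {α β k e : ℕ → ℝ} {A blo bhi : ℝ}
    (hk0 : ∀ n, 0 ≤ k n) (he0 : ∀ n, 0 ≤ e n) (hk : Summable k) (he : Summable e)
    (hα0 : ∀ n, 0 ≤ α n) (hαA : ∀ n, α n ≤ A) (hA : A < 1)
    (hβ : ∀ n, β n ∈ Icc blo bhi) (hblo : 0 < blo) (hbhi : bhi < 1)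
    (hv : ∀ n, ‖v n‖ ≤ (1 + k n) * ‖u n‖ + e n)
    (hu : ∀ n, ‖u (n + 1)‖ ≤
      α n * ‖u n‖ + (1 - α n) * ((1 + k n) * ‖β n • u n + (1 - β n) • v n‖ + e n)) :
    Tendsto (fun n => ‖u n - v n‖) atTop (𝓝 0) := by
  set s := fun n => (1 + k n) * ‖u n‖ + e n
  set w := fun n => β n • u n + (1 - β n) • v n
  have hus : ∀ n, ‖u n‖ ≤ s n := fun n => by nlinarith [hk0 n, he0 n, norm_nonneg (u n)]
  have hws : ∀ n, ‖w n‖ ≤ s n := fun n => by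
    have hβ0 : 0 ≤ β n := hblo.le.trans (hβ n).1
    have hβ1 : 0 ≤ 1 - β n := by linarith [(hβ n).2]
    calc ‖w n‖ ≤ β n * ‖u n‖ + (1 - β n) * ‖v n‖ := by
          refine (norm_add_le _ _).trans_eq ?_
          rw [norm_smul_of_nonneg hβ0, norm_smul_of_nonneg hβ1]
      _ ≤ β n * s n + (1 - β n) * s n := by gcongr; exacts [hus n, hv n]
      _ = s n := by ring
  have hrec : ∀ n, ‖u (n + 1)‖ ≤ (1 + k n * (2 + k n)) * ‖u n‖ + (2 + k n) * e n :=
      fun n => by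
    have hα1 : 0 ≤ 1 - α n := by linarith [hαA n]
    have hk1 : 0 ≤ 1 + k n := by linarith [hk0 n]
    have hsw : (1 + k n) * ‖w n‖ + e n ≤ (1 + k n) * s n + e n := by gcongr; exact hws n
    have hss : s n ≤ (1 + k n) * s n + e n := by
      nlinarith [hk0 n, he0 n, (norm_nonneg (u n)).trans (hus n)]
    calc ‖u (n + 1)‖ ≤ α n * s n + (1 - α n) * ((1 + k n) * s n + e n) := by
          refine (hu n).trans ?_
          gcongr
          · exact hα0 n
          · exact hus n
      _ ≤ (1 + k n) * s n + e n := by nlinarith [hα0 n]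
      _ = _ := by ring
  obtain ⟨l, hl⟩ := exists_tendsto_of_le_one_add_mul_add (fun n => norm_nonneg (u n))
    (fun n => by nlinarith [hk0 n]) (fun n => by nlinarith [hk0 n, he0 n])
    (((hk.mul_left 2).add (summable_mul_of_nonneg hk hk hk0 hk0)).congr fun n => by ring)
    (((he.mul_left 2).add (summable_mul_of_nonneg hk he hk0 he0)).congr fun n => by ring)
    hrec
  have hk_lim := hk.tendsto_atTop_zero
  have he_lim := he.tendsto_atTop_zero
  have hs : Tendsto s atTop (𝓝 l) := by
    simpa using (((tendsto_const_nhds (x := (1 : ℝ))).add hk_lim).mul hl).add he_lim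
  have hσ : Tendsto (fun n => (1 + k n) * ‖w n‖ + e n) atTop (𝓝 l) :=
    tendsto_of_le_mul_add_one_sub_mul (τ := fun n => (1 + k n) * s n + e n) hl hα0 hαA hA
      hu (fun n => by nlinarith [hws n, hk0 n])
      (by simpa using (((tendsto_const_nhds (x := (1 : ℝ))).add hk_lim).mul hs).add he_lim)
  have hw : Tendsto (fun n => ‖w n‖) atTop (𝓝 l) := by
    have := (hσ.sub he_lim).div ((tendsto_const_nhds (x := (1 : ℝ))).add hk_lim)
      (by norm_num)
    simp only [add_sub_cancel_right, sub_zero, add_zero, div_one] at this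
    exact this.congr fun n => mul_div_cancel_left₀ _ (by linarith [hk0 n])
  exact tendsto_norm_sub_of_tendsto_norm_smul_add_one_sub_smul hβ hblo hbhi hus hv hs hw

theorem tendsto_norm_sub_of_twoStepIteration {K : Set E} (hK : Convex ℝ K) {m : ℕ}
    {P Q : Fin m → ℕ → E → E} (hPK : ∀ i n, MapsTo (P i n) K K)
    (hQK : ∀ i n, MapsTo (Q i n) K K) {p : E} {k e : ℕ → ℝ} (hk0 : ∀ n, 0 ≤ k n)
    (he0 : ∀ n, 0 ≤ e n) (hk : Summable k) (he : Summable e)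
    (hP : ∀ i n, ∀ z ∈ K, ‖P i n z - p‖ ≤ (1 + k n) * ‖z - p‖ + e n)
    (hQ : ∀ i n, ∀ z ∈ K, ‖Q i n z - p‖ ≤ (1 + k n) * ‖z - p‖ + e n)
    {a b : Fin (m + 1) → ℕ → ℝ} {A blo bhi : ℝ} (ha0 : ∀ j n, 0 ≤ a j n)
    (haA : ∀ n, a 0 n ≤ A) (hA : A < 1) (hb0 : ∀ j n, 0 ≤ b j n)
    (hb : ∀ n, b 0 n ∈ Icc blo bhi) (hblo : 0 < blo) (hbhi : bhi < 1)
    (hasum : ∀ n, ∑ j, a j n = 1) (hbsum : ∀ n, ∑ j, b j n = 1) {x y : ℕ → E} (hx0 : x 0 ∈ K)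
    (hy : ∀ n, y n = b 0 n • x n + ∑ i, b i.succ n • P i n (x n))
    (hx : ∀ n, x (n + 1) = a 0 n • x n + ∑ i, a i.succ n • Q i n (y n)) :
    Tendsto (fun n => ‖y n - x n‖) atTop (𝓝 0) := by
  have hK := twoStepIteration_mem hK hPK hQK ha0 hb0 hasum hbsum hx0 hy hx
  have htail : ∀ {w : Fin (m + 1) → ℝ}, ∑ j, w j = 1 → ∑ i : Fin m, w i.succ = 1 - w 0 :=
    fun hw => by rw [Fin.sum_univ_succ] at hw; linarith
  have hb1 : ∀ n, 0 < 1 - b 0 n := fun n => by linarith [(hb n).2]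
  set v := fun n => (1 - b 0 n)⁻¹ • ∑ i, b i.succ n • (P i n (x n) - p)
  have hyv : ∀ n, y n - p = b 0 n • (x n - p) + (1 - b 0 n) • v n := fun n => by
    rw [hy n, smul_add_sum_smul_sub (hbsum n), smul_inv_smul₀ (hb1 n).ne']
  have hv : ∀ n, ‖v n‖ ≤ (1 + k n) * ‖x n - p‖ + e n := fun n => by
    rw [norm_smul_of_nonneg (inv_nonneg.2 (hb1 n).le), inv_mul_le_iff₀ (hb1 n),
      ← htail (hbsum n)]
    exact norm_sum_smul_le_of_norm_le _ (fun i _ => hb0 _ n) fun i _ => hP i n _ (hK n).1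
  have hxp : ∀ n, ‖x (n + 1) - p‖ ≤
      a 0 n * ‖x n - p‖ + (1 - a 0 n) * ((1 + k n) * ‖y n - p‖ + e n) := fun n => by
    rw [hx n, smul_add_sum_smul_sub (hasum n), ← norm_smul_of_nonneg (ha0 0 n),
      ← htail (hasum n)]
    exact norm_add_le_of_le le_rfl (norm_sum_smul_le_of_norm_le _ (fun i _ => ha0 _ n)
      fun i _ => hQ i n _ (hK n).2)
  have hconv := tendsto_norm_sub_of_norm_succ_le (u := fun n => x n - p) hk0 he0 hk he
    (fun n => ha0 0 n) haA hA hb hblo hbhi hv fun n => by rw [← hyv]; exact hxp n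
  refine squeeze_zero (fun n => norm_nonneg _) (fun n => ?_) hconv
  have hyx : y n - x n = (1 - b 0 n) • (v n - (x n - p)) := by
    rw [show y n - x n = (y n - p) - (x n - p) by abel, hyv n]
    module
  rw [hyx, norm_smul_of_nonneg (hb1 n).le, norm_sub_rev]
  exact mul_le_of_le_one_left (norm_nonneg _) (by linarith [hb0 0 n])

end Normed

theorem stmt12_general
    {X : Type*} [NormedAddCommGroup X] [NormedSpace ℝ X]
    [UniformConvexSpace X]
    {K : Set X} (hKco : Convex ℝ K)
    {m : ℕ}
    (T I : Fin m → X → X)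
    (hTK : ∀ i, Set.MapsTo (T i) K K) (hIK : ∀ i, Set.MapsTo (I i) K K)
    (μ lam tμ tlam : Fin m → ℕ → ℝ)
    (hμ0 : ∀ i n, 0 ≤ μ i n) (hlam0 : ∀ i n, 0 ≤ lam i n)
    (htμ0 : ∀ i n, 0 ≤ tμ i n) (htlam0 : ∀ i n, 0 ≤ tlam i n)
    (hμsum : ∀ i, Summable (μ i)) (hlamsum : ∀ i, Summable (lam i))
    (htμsum : ∀ i, Summable (tμ i)) (htlamsum : ∀ i, Summable (tlam i))
    (φ ψ : Fin m → ℝ → ℝ)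
    (hφmono : ∀ i, StrictMonoOn (φ i) (Set.Ici 0))
    (hφpos : ∀ i t, 0 ≤ t → 0 ≤ φ i t)
    (hψmono : ∀ i, StrictMonoOn (ψ i) (Set.Ici 0))
    (hψpos : ∀ i t, 0 ≤ t → 0 ≤ ψ i t)
    (hI : ∀ i, ∀ n, 1 ≤ n → ∀ x ∈ K, ∀ y ∈ K,
      ‖(I i)^[n] x - (I i)^[n] y‖ ≤ ‖x - y‖ + tμ i n * ψ i ‖x - y‖ + tlam i n)
    (hT : ∀ i, ∀ n, 1 ≤ n → ∀ x ∈ K, ∀ y ∈ K,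
      ‖(T i)^[n] x - (T i)^[n] y‖ ≤
        ‖(I i)^[n] x - (I i)^[n] y‖ + μ i n * φ i ‖(I i)^[n] x - (I i)^[n] y‖ + lam i n)
    (F : Set X)
    (hFdef : ∀ p, p ∈ F ↔ p ∈ K ∧ ∀ i, T i p = p ∧ I i p = p)
    (hFne : F.Nonempty)
    (M Ms N Ns : Fin m → ℝ)
    (hM : ∀ i, 0 < M i) (hMs : ∀ i, 0 < Ms i) (hN : ∀ i, 0 < N i) (hNs : ∀ i, 0 < Ns i)
    (hφbound : ∀ i ξ, M i ≤ ξ → φ i ξ ≤ Ms i * ξ)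
    (hψbound : ∀ i ζ, N i ≤ ζ → ψ i ζ ≤ Ns i * ζ)
    (alo ahi blo bhi : ℝ)
    (halo : 0 < alo) (hahi1 : ahi < 1)
    (hblo : 0 < blo) (hbhi1 : bhi < 1)
    (a b : Fin (m + 1) → ℕ → ℝ)
    (ha : ∀ j n, a j n ∈ Set.Icc alo ahi) (hb : ∀ j n, b j n ∈ Set.Icc blo bhi)
    (hasum : ∀ n, ∑ j, a j n = 1) (hbsum : ∀ n, ∑ j, b j n = 1)
    (x y : ℕ → X) (hx0 : x 0 ∈ K)
    (hy : ∀ n, y n = b 0 n • x n + ∑ i : Fin m, b i.succ n • (I i)^[n] (x n))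
    (hxrec : ∀ n, x (n + 1) = a 0 n • x n + ∑ i : Fin m, a i.succ n • (T i)^[n] (y n))
    : Tendsto (fun n => ‖y n - x n‖) atTop (nhds 0) := by
  obtain ⟨p, hpF⟩ := hFne
  obtain ⟨hpK, hp⟩ := (hFdef p).1 hpF
  have hIp : ∀ i n, (I i)^[n] p = p := fun i => Function.iterate_fixed (hp i).2
  have hTp : ∀ i n, (T i)^[n] p = p := fun i => Function.iterate_fixed (hp i).1
  have hIb : ∀ i, HasSummableQuasiBound K p (fun n => (I i)^[n]) fun _ => id := fun i =>
    .of_gauge rfl (htμ0 i) (htlam0 i) (htμsum i) (htlamsum i) (hψmono i).monotoneOn (hN i).le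
      (hNs i).le (hψpos i _ (hN i).le) (hψbound i) fun n hn z hz => by
        simpa only [hIp, id] using hI i n hn z hz p hpK
  have hTI : ∀ i, HasSummableQuasiBound K p (fun n => (T i)^[n]) fun n => (I i)^[n] := fun i =>
    .of_gauge rfl (hμ0 i) (hlam0 i) (hμsum i) (hlamsum i) (hφmono i).monotoneOn (hM i).le
      (hMs i).le (hφpos i _ (hM i).le) (hφbound i) fun n hn z hz => by
        simpa only [hIp, hTp] using hT i n hn z hz p hpK
  obtain ⟨k, e, hk0, he0, hk, he, hbound⟩ := HasSummableQuasiBound.exists_common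
    (S := Sum.elim (fun i n => (I i)^[n]) fun i n => (T i)^[n])
    (Sum.rec hIb fun i => (hTI i).trans (hIb i))
  exact tendsto_norm_sub_of_twoStepIteration hKco (fun i n => (hIK i).iterate n)
    (fun i n => (hTK i).iterate n) hk0 he0 hk he (fun i => hbound (.inl i))
    (fun i => hbound (.inr i)) (fun j n => halo.le.trans (ha j n).1) (fun n => (ha 0 n).2)
    hahi1 (fun j n => hblo.le.trans (hb j n).1) (hb 0) hblo hbhi1 hasum hbsum hx0 hy hxrec

/-- under the bounded-coefficient scheme hypotheses with all maps
continuous, `lim ‖y n - x n‖ = 0`. -/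
theorem stmt12
    {X : Type*} [NormedAddCommGroup X] [NormedSpace ℝ X] [CompleteSpace X]
    [UniformConvexSpace X]
    {K : Set X} (hKne : K.Nonempty) (hKcl : IsClosed K) (hKco : Convex ℝ K)
    {m : ℕ} (hm : 1 ≤ m)
    (T I : Fin m → X → X)
    (hTK : ∀ i, Set.MapsTo (T i) K K) (hIK : ∀ i, Set.MapsTo (I i) K K)
    (hTcont : ∀ i, ContinuousOn (T i) K) (hIcont : ∀ i, ContinuousOn (I i) K)
    (μ lam tμ tlam : Fin m → ℕ → ℝ)
    (hμ0 : ∀ i n, 0 ≤ μ i n) (hlam0 : ∀ i n, 0 ≤ lam i n)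
    (htμ0 : ∀ i n, 0 ≤ tμ i n) (htlam0 : ∀ i n, 0 ≤ tlam i n)
    (hμlim : ∀ i, Tendsto (μ i) atTop (nhds 0)) (hlamlim : ∀ i, Tendsto (lam i) atTop (nhds 0))
    (htμlim : ∀ i, Tendsto (tμ i) atTop (nhds 0))
    (htlamlim : ∀ i, Tendsto (tlam i) atTop (nhds 0))
    (hμsum : ∀ i, Summable (μ i)) (hlamsum : ∀ i, Summable (lam i))
    (htμsum : ∀ i, Summable (tμ i)) (htlamsum : ∀ i, Summable (tlam i))
    (φ ψ : Fin m → ℝ → ℝ)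
    (hφmono : ∀ i, StrictMonoOn (φ i) (Set.Ici 0))
    (hφcont : ∀ i, ContinuousOn (φ i) (Set.Ici 0))
    (hφ0 : ∀ i, φ i 0 = 0) (hφpos : ∀ i t, 0 ≤ t → 0 ≤ φ i t)
    (hψmono : ∀ i, StrictMonoOn (ψ i) (Set.Ici 0))
    (hψcont : ∀ i, ContinuousOn (ψ i) (Set.Ici 0))
    (hψ0 : ∀ i, ψ i 0 = 0) (hψpos : ∀ i t, 0 ≤ t → 0 ≤ ψ i t)
    (hI : ∀ i, ∀ n, 1 ≤ n → ∀ x ∈ K, ∀ y ∈ K,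
      ‖(I i)^[n] x - (I i)^[n] y‖ ≤ ‖x - y‖ + tμ i n * ψ i ‖x - y‖ + tlam i n)
    (hT : ∀ i, ∀ n, 1 ≤ n → ∀ x ∈ K, ∀ y ∈ K,
      ‖(T i)^[n] x - (T i)^[n] y‖ ≤
        ‖(I i)^[n] x - (I i)^[n] y‖ + μ i n * φ i ‖(I i)^[n] x - (I i)^[n] y‖ + lam i n)
    (F : Set X)
    (hFdef : ∀ p, p ∈ F ↔ p ∈ K ∧ ∀ i, T i p = p ∧ I i p = p)
    (hFne : F.Nonempty)
    (M Ms N Ns : Fin m → ℝ)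
    (hM : ∀ i, 0 < M i) (hMs : ∀ i, 0 < Ms i) (hN : ∀ i, 0 < N i) (hNs : ∀ i, 0 < Ns i)
    (hφbound : ∀ i ξ, M i ≤ ξ → φ i ξ ≤ Ms i * ξ)
    (hψbound : ∀ i ζ, N i ≤ ζ → ψ i ζ ≤ Ns i * ζ)
    (alo ahi blo bhi : ℝ)
    (halo : 0 < alo) (hahi : alo < ahi) (hahi1 : ahi < 1)
    (hblo : 0 < blo) (hbhi : blo < bhi) (hbhi1 : bhi < 1)
    (a b : Fin (m + 1) → ℕ → ℝ)
    (ha : ∀ j n, a j n ∈ Set.Icc alo ahi) (hb : ∀ j n, b j n ∈ Set.Icc blo bhi)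
    (hasum : ∀ n, ∑ j, a j n = 1) (hbsum : ∀ n, ∑ j, b j n = 1)
    (x y : ℕ → X) (hx0 : x 0 ∈ K)
    (hy : ∀ n, y n = b 0 n • x n + ∑ i : Fin m, b i.succ n • (I i)^[n] (x n))
    (hxrec : ∀ n, x (n + 1) = a 0 n • x n + ∑ i : Fin m, a i.succ n • (T i)^[n] (y n))
    : Tendsto (fun n => ‖y n - x n‖) atTop (nhds 0) :=
  stmt12_general hKco T I hTK hIK μ lam tμ tlam hμ0 hlam0 htμ0 htlam0 hμsum hlamsum htμsum htlamsum
    φ ψ hφmono hφpos hψmono hψpos hI hT F hFdef hFne M Ms N Ns hM hMs hN hNs hφbound hψbound alo ahi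
    blo bhi halo hahi1 hblo hbhi1 a b ha hb hasum hbsum x y hx0 hy hxrec
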